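/- There is a constant C > 0 such that |Var(S_w) − (α₁α₂/α²)·w| ≤ C·log w for every integer w ≥ 2. -/

import Mathlib

open MeasureTheory ProbabilityTheory Finset

/-!
Since `ξ₁` is almost surely constant and the `ξᵢ` are independent, `Var(S_w) = ∑_{i=2}^w Var(ξᵢ)`.
With `t = i - 1`, `ξᵢ` has the law on `{0, 1, 2}` with weights `α₁t : α₂t : β`; as `t → ∞` this
tends to the Bernoulli law with weights `α₁ : α₂`, whose variance is `α₁α₂/α²`, and the two
variances differ by `O(1/t)`. Summing, the error is `O(∑_{t < w} 1/t) = O(log w)`.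
-/

section FiniteSupport

variable {Ω β : Type*} [MeasurableSpace Ω] {μ : Measure Ω}
  [MeasurableSpace β] [MeasurableSingletonClass β] {Y : Ω → β}

lemma ae_mem_of_sum_measureReal_eq_one [IsProbabilityMeasure μ] (hY : Measurable Y)
    (s : Finset β) (h : ∑ k ∈ s, μ.real {ω | Y ω = k} = 1) : ∀ᵐ ω ∂μ, Y ω ∈ s := by
  have hs : μ.real (Y ⁻¹' s) = 1 := by
    rw [← h, ← sum_measureReal_preimage_singleton s fun k _ => hY (measurableSet_singleton k)]
    rfl
  refine (ae_iff_measure_eq (p := fun ω => Y ω ∈ s) (hY s.measurableSet).nullMeasurableSet).2 ?_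
  rw [measure_univ]
  exact (ENNReal.toReal_eq_one_iff _).mp hs

lemma integral_comp_eq_sum_of_ae_mem [IsFiniteMeasure μ] (hY : Measurable Y) {s : Finset β}
    (hs : ∀ᵐ ω ∂μ, Y ω ∈ s) (f : β → ℝ) :
    ∫ ω, f (Y ω) ∂μ = ∑ k ∈ s, μ.real {ω | Y ω = k} * f k := by
  have hfib : ∀ k : β, MeasurableSet {ω | Y ω = k} := fun k => hY (measurableSet_singleton k)
  calc ∫ ω, f (Y ω) ∂μ = ∫ ω, ∑ k ∈ s, {ω | Y ω = k}.indicator (fun _ => f k) ω ∂μ := by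
        refine integral_congr_ae ?_
        filter_upwards [hs] with ω hω
        rw [sum_eq_single_of_mem _ hω fun k _ hk => ?_]
        · simp
        · simp [Ne.symm hk]
    _ = ∑ k ∈ s, μ.real {ω | Y ω = k} * f k := by
        rw [integral_finsetSum _ fun k _ => (integrable_const (f k)).indicator (hfib k)]
        simp [integral_indicator_const _ (hfib _)]

end FiniteSupport

lemma memLp_natCast_of_ae_mem {Ω : Type*} [MeasurableSpace Ω] {μ : Measure Ω}
    [IsFiniteMeasure μ] {Y : Ω → ℕ} (hY : Measurable Y)
    {s : Finset ℕ} (hs : ∀ᵐ ω ∂μ, Y ω ∈ s) (p : ENNReal) : MemLp (fun ω => (Y ω : ℝ)) p μ := by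
  refine MemLp.of_bound (by fun_prop) ((s.sup id : ℕ) : ℝ) ?_
  filter_upwards [hs] with ω hω
  simpa using le_sup (f := id) hω

section ThreePoint

variable {Ω : Type*} [MeasurableSpace Ω]

def HasThreePointLaw (μ : Measure Ω) (Y : Ω → ℕ) (a b c : ℝ) : Prop :=
  μ.real {ω | Y ω = 0} = a / (a + b + c) ∧ μ.real {ω | Y ω = 1} = b / (a + b + c) ∧
    μ.real {ω | Y ω = 2} = c / (a + b + c)

noncomputable def threePointVariance (a b c : ℝ) : ℝ :=
  (b + 4 * c) / (a + b + c) - ((b + 2 * c) / (a + b + c)) ^ 2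

variable {μ : Measure Ω} [IsProbabilityMeasure μ] {Y : Ω → ℕ} {a b c : ℝ}

lemma HasThreePointLaw.ae_mem_range (hY : Measurable Y) (hd : a + b + c ≠ 0)
    (h : HasThreePointLaw μ Y a b c) : ∀ᵐ ω ∂μ, Y ω ∈ range 3 := by
  obtain ⟨h0, h1, h2⟩ := h
  refine ae_mem_of_sum_measureReal_eq_one hY _ ?_
  simp only [sum_range_succ, range_zero, sum_empty, h0, h1, h2]
  field_simp
  ring

lemma HasThreePointLaw.memLp (hY : Measurable Y) (hd : a + b + c ≠ 0)
    (h : HasThreePointLaw μ Y a b c) : MemLp (fun ω => (Y ω : ℝ)) 2 μ :=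
  memLp_natCast_of_ae_mem hY (h.ae_mem_range hY hd) 2

lemma HasThreePointLaw.variance_eq (hY : Measurable Y) (hd : a + b + c ≠ 0)
    (h : HasThreePointLaw μ Y a b c) :
    Var[fun ω => (Y ω : ℝ); μ] = threePointVariance a b c := by
  have hs := h.ae_mem_range hY hd
  obtain ⟨h0, h1, h2⟩ := h
  rw [variance_eq_sub (memLp_natCast_of_ae_mem hY hs 2)]
  have hmean := integral_comp_eq_sum_of_ae_mem hY hs (fun k => (k : ℝ))
  have hsq := integral_comp_eq_sum_of_ae_mem hY hs (fun k => (k : ℝ) ^ 2)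
  simp only [Pi.pow_apply, hmean, hsq, sum_range_succ, range_zero, sum_empty, h0, h1, h2,
    threePointVariance]
  field_simp
  ring

end ThreePoint

lemma exists_abs_threePointVariance_sub_le {α₁ α₂ β : ℝ} (hα : 0 < α₁ + α₂) (hβ : 0 ≤ β) :
    ∃ K, ∀ t : ℝ, 1 ≤ t →
      |threePointVariance (α₁ * t) (α₂ * t) β - α₁ * α₂ / (α₁ + α₂) ^ 2| ≤ K / t := by
  set α := α₁ + α₂ with hα_def
  set A := α ^ 2 * (4 * α₁ + α₂) - 2 * α * α₁ * α₂
  refine ⟨(β * |A| + |α₁ * α₂| * β ^ 2) / α ^ 4, fun t ht => ?_⟩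
  have ht0 : 0 < t := by linarith
  have hD : α * t ≤ α * t + β := by linarith
  have hN : |β * t * A - α₁ * α₂ * β ^ 2| ≤ (β * |A| + |α₁ * α₂| * β ^ 2) * t := by
    calc |β * t * A - α₁ * α₂ * β ^ 2| ≤ β * t * |A| + |α₁ * α₂| * β ^ 2 := by
          refine (abs_sub _ _).trans_eq ?_
          rw [abs_mul (β * t), abs_mul (α₁ * α₂), abs_of_nonneg (by positivity : 0 ≤ β * t),
            abs_of_nonneg (sq_nonneg β)]
      _ ≤ (β * |A| + |α₁ * α₂| * β ^ 2) * t := by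
          nlinarith [mul_nonneg (mul_nonneg (abs_nonneg (α₁ * α₂)) (sq_nonneg β)) (sub_nonneg.2 ht)]
  calc |threePointVariance (α₁ * t) (α₂ * t) β - α₁ * α₂ / α ^ 2|
      = |β * t * A - α₁ * α₂ * β ^ 2| / (α ^ 2 * (α * t + β) ^ 2) := by
        rw [← abs_of_pos (by positivity : 0 < α ^ 2 * (α * t + β) ^ 2), ← abs_div]
        congr 1
        rw [threePointVariance, ← add_mul, ← hα_def]
        field_simp
        ring
    _ ≤ (β * |A| + |α₁ * α₂| * β ^ 2) * t / (α ^ 2 * (α * t) ^ 2) := by gcongr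
    _ = (β * |A| + |α₁ * α₂| * β ^ 2) / α ^ 4 / t := by field_simp

lemma sum_Icc_two_inv_sub_one_le_one_add_log (w : ℕ) :
    ∑ i ∈ Icc 2 w, ((i : ℝ) - 1)⁻¹ ≤ 1 + Real.log w := by
  rcases lt_or_ge w 2 with hw | hw
  · rw [Icc_eq_empty (by omega), sum_empty]
    linarith [Real.log_natCast_nonneg w]
  have hharm : ∑ i ∈ Icc 2 w, ((i : ℝ) - 1)⁻¹ = harmonic (w - 1) := by
    rw [← Ico_add_one_right_eq_Icc, sum_Ico_eq_sum_range, harmonic]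
    push_cast
    refine sum_congr (by congr 1) fun k _ => ?_
    ring_nf
  rw [hharm]
  refine (harmonic_le_one_add_log (w - 1)).trans ?_
  gcongr
  · exact_mod_cast Nat.sub_pos_of_lt hw
  · exact_mod_cast Nat.sub_le w 1

lemma exists_abs_sum_Icc_sub_mul_le_mul_log {a : ℕ → ℝ} {c K : ℝ}
    (h : ∀ i, 2 ≤ i → |a i - c| ≤ K / (i - 1)) :
    ∃ C, 0 < C ∧ ∀ w : ℕ, 2 ≤ w → |∑ i ∈ Icc 1 w, a i - c * w| ≤ C * Real.log w := by
  have hK : 0 ≤ K := by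
    have h2 := h 2 le_rfl
    norm_num at h2
    exact (abs_nonneg _).trans h2
  set B := |a 1 - c| + K + 1
  have hB : 0 < B := by positivity
  have hlog2 : 0 < Real.log 2 := Real.log_pos one_lt_two
  refine ⟨B / Real.log 2 + K, by positivity, fun w hw => ?_⟩
  have hlogw : Real.log 2 ≤ Real.log w := Real.log_le_log two_pos (by exact_mod_cast hw)
  have hsplit : ∑ i ∈ Icc 1 w, a i - c * w = (a 1 - c) + ∑ i ∈ Icc 2 w, (a i - c) := by
    rw [← insert_Icc_add_one_left_eq_Icc (by omega : 1 ≤ w), sum_insert (by simp),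
      sum_sub_distrib, sum_const, Nat.card_Icc, nsmul_eq_mul, Nat.cast_sub (by omega)]
    push_cast
    ring
  have hB_le : B ≤ B / Real.log 2 * Real.log w := by
    rw [div_mul_eq_mul_div, le_div_iff₀ hlog2]
    exact mul_le_mul_of_nonneg_left hlogw hB.le
  calc |∑ i ∈ Icc 1 w, a i - c * w|
      ≤ |a 1 - c| + ∑ i ∈ Icc 2 w, |a i - c| := by
        rw [hsplit]
        exact (abs_add_le _ _).trans (add_le_add_right (abs_sum_le_sum_abs _ _) _)
    _ ≤ |a 1 - c| + K * ∑ i ∈ Icc 2 w, ((i : ℝ) - 1)⁻¹ := by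
        rw [mul_sum]
        gcongr with i hi
        exact (h i (mem_Icc.1 hi).1).trans_eq (div_eq_mul_inv _ _)
    _ ≤ B + K * Real.log w := by
        have := mul_le_mul_of_nonneg_left (sum_Icc_two_inv_sub_one_le_one_add_log w) hK
        linarith
    _ ≤ (B / Real.log 2 + K) * Real.log w := by linarith

lemma variance_natCast_sum {Ω ι : Type*} [MeasurableSpace Ω] {μ : Measure Ω} {ξ : ι → Ω → ℕ}
    {s : Finset ι} (hs : ∀ i ∈ s, MemLp (fun ω => (ξ i ω : ℝ)) 2 μ)
    (h : Set.Pairwise s fun i j => (fun ω => (ξ i ω : ℝ)) ⟂ᵢ[μ] fun ω => (ξ j ω : ℝ)) :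
    Var[fun ω => ((∑ i ∈ s, ξ i ω : ℕ) : ℝ); μ] = ∑ i ∈ s, Var[fun ω => (ξ i ω : ℝ); μ] := by
  rw [← IndepFun.variance_sum hs h]
  congr 1
  ext ω
  simp

lemma ProbabilityTheory.iIndepFun.indepFun_natCast {Ω : Type*} [MeasurableSpace Ω]
    {μ : Measure Ω} {W : Ω → ℕ} {ξ : ℕ → Ω → ℕ}
    (h : iIndepFun (fun i : ℕ => if i = 0 then W else ξ (i + 1)) μ) {i j : ℕ}
    (hi : 1 < i) (hj : 1 < j) (hij : i ≠ j) :
    (fun ω => (ξ i ω : ℝ)) ⟂ᵢ[μ] fun ω => (ξ j ω : ℝ) := by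
  have hξ := h.indepFun (show i - 1 ≠ j - 1 by omega)
  simp only [if_neg (show i - 1 ≠ 0 by omega), if_neg (show j - 1 ≠ 0 by omega),
    Nat.sub_add_cancel hi.le, Nat.sub_add_cancel hj.le] at hξ
  exact hξ.comp measurable_from_top measurable_from_top

theorem stmt_8_general (α₁ α₂ β : ℝ) (hα₁ : 0 < α₁) (hα₂ : 0 < α₂) (hβ : 0 < β)
    (α : ℝ) (hα : α = α₁ + α₂)
    {Ω : Type*} [MeasurableSpace Ω] (μ : Measure Ω) [IsProbabilityMeasure μ]
    (W : Ω → ℕ) (ξ : ℕ → Ω → ℕ)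
    (hξmeas : ∀ i, Measurable (ξ i))
    (hξ1 : ∀ᵐ ω ∂μ, ξ 1 ω = 2)
    (hindep : iIndepFun
      (fun i : ℕ => if i = 0 then W else ξ (i + 1)) μ)
    (hξ : ∀ w : ℕ, 2 ≤ w →
      (μ {ω | ξ w ω = 0}).toReal = α₁ * (w - 1) / (α * (w - 1) + β) ∧
      (μ {ω | ξ w ω = 1}).toReal = α₂ * (w - 1) / (α * (w - 1) + β) ∧
      (μ {ω | ξ w ω = 2}).toReal = β / (α * (w - 1) + β))
    (S : ℕ → Ω → ℕ)
    (hS : ∀ w ω, S w ω = ∑ i ∈ Finset.Icc 1 w, ξ i ω) :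
    ∃ C : ℝ, 0 < C ∧ ∀ w : ℕ, 2 ≤ w →
      |variance (fun ω => (S w ω : ℝ)) μ - (α₁ * α₂ / α ^ 2) * w| ≤ C * Real.log w := by
  subst hα
  have ht : ∀ i : ℕ, 2 ≤ i → (1 : ℝ) ≤ i - 1 := fun i hi => by
    linarith [(Nat.ofNat_le_cast.2 hi : (2 : ℝ) ≤ i)]
  have hd : ∀ i : ℕ, 2 ≤ i → α₁ * ((i : ℝ) - 1) + α₂ * (i - 1) + β ≠ 0 := fun i hi => by
    have := ht i hi
    positivity
  have hlaw : ∀ i, 2 ≤ i → HasThreePointLaw μ (ξ i) (α₁ * (i - 1)) (α₂ * (i - 1)) β :=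
    fun i hi => by
      have h := hξ i hi
      rwa [add_mul] at h
  have hξ1' : (fun ω => (ξ 1 ω : ℝ)) =ᵐ[μ] fun _ => 2 := by
    filter_upwards [hξ1] with ω hω
    simp [hω]
  have hmem : ∀ i, 1 ≤ i → MemLp (fun ω => (ξ i ω : ℝ)) 2 μ := by
    intro i hi
    rcases hi.eq_or_lt with rfl | hi
    · exact (memLp_const 2).ae_eq hξ1'.symm
    · exact (hlaw i hi).memLp (hξmeas i) (hd i hi)
  have hpair : ∀ i j, 1 ≤ i → 1 ≤ j → i ≠ j →
      (fun ω => (ξ i ω : ℝ)) ⟂ᵢ[μ] fun ω => (ξ j ω : ℝ) := by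
    intro i j hi hj hij
    rcases hi.eq_or_lt with rfl | hi
    · exact (indepFun_const_left 2 _).congr hξ1'.symm Filter.EventuallyEq.rfl
    rcases hj.eq_or_lt with rfl | hj
    · exact (indepFun_const_right _ 2).congr Filter.EventuallyEq.rfl hξ1'.symm
    exact hindep.indepFun_natCast hi hj hij
  obtain ⟨K, hK⟩ := exists_abs_threePointVariance_sub_le (add_pos hα₁ hα₂) hβ.le
  obtain ⟨C, hC, hbound⟩ := exists_abs_sum_Icc_sub_mul_le_mul_log
    (a := fun i => Var[fun ω => (ξ i ω : ℝ); μ]) (c := α₁ * α₂ / (α₁ + α₂) ^ 2) (K := K)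
    fun i hi => by
      rw [(hlaw i hi).variance_eq (hξmeas i) (hd i hi)]
      exact hK _ (ht i hi)
  refine ⟨C, hC, fun w hw => ?_⟩
  simp_rw [hS]
  rw [variance_natCast_sum (fun i hi => hmem i (mem_Icc.1 hi).1)
    fun i hi j hj hij => hpair i j (mem_Icc.1 hi).1 (mem_Icc.1 hj).1 hij]
  exact hbound w hw

/-- `|Var(S_w) - (α₁α₂/α²)w| ≤ C log w` for some constant `C > 0` and all `w ≥ 2`. -/
theorem stmt_8 (α₁ α₂ β : ℝ) (hα₁ : 0 < α₁) (hα₂ : 0 < α₂) (hβ : 0 < β)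
    (α : ℝ) (hα : α = α₁ + α₂)
    (x : ℕ → ℝ) (hx1 : x 1 = 1 / (α + β + 1))
    (hxrec : ∀ w : ℕ, 2 ≤ w →
      x w = (α * (w - 1) + β) / (α * w + β + 1) * x (w - 1))
    {Ω : Type*} [MeasurableSpace Ω] (μ : Measure Ω) [IsProbabilityMeasure μ]
    (W : Ω → ℕ) (ξ : ℕ → Ω → ℕ)
    (hWmeas : Measurable W) (hξmeas : ∀ i, Measurable (ξ i))
    (hW : ∀ w : ℕ, 1 ≤ w → (μ {ω | W ω = w}).toReal = x w)
    (hξ1 : ∀ᵐ ω ∂μ, ξ 1 ω = 2)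
    (hindep : iIndepFun
      (fun i : ℕ => if i = 0 then W else ξ (i + 1)) μ)
    (hξ : ∀ w : ℕ, 2 ≤ w →
      (μ {ω | ξ w ω = 0}).toReal = α₁ * (w - 1) / (α * (w - 1) + β) ∧
      (μ {ω | ξ w ω = 1}).toReal = α₂ * (w - 1) / (α * (w - 1) + β) ∧
      (μ {ω | ξ w ω = 2}).toReal = β / (α * (w - 1) + β))
    (S : ℕ → Ω → ℕ)
    (hS : ∀ w ω, S w ω = ∑ i ∈ Finset.Icc 1 w, ξ i ω) :
    ∃ C : ℝ, 0 < C ∧ ∀ w : ℕ, 2 ≤ w →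
      |variance (fun ω => (S w ω : ℝ)) μ - (α₁ * α₂ / α ^ 2) * w| ≤ C * Real.log w :=
  stmt_8_general α₁ α₂ β hα₁ hα₂ hβ α hα μ W ξ hξmeas hξ1 hindep hξ S hS
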